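/- Let (G,P) be a quasi-lattice ordered group with Toeplitz isometries T_s on ℓ²(P), and suppose F ⊆ P \ {e} is a FESSPE. For x ∈ P set p_x = ∏_{a∈F} (T_x T_x* − T_{xa} T_{xa}*). Then p_e is the rank-one projection onto ε_e, and for all x, y ∈ P the operator T_x p_e T_y* is the rank-one operator ε_y ⊗ ε_x (mapping ζ ↦ ε_x ⟨ε_y, ζ⟩). Consequently the C*-algebra T(G,P) generated by {T_s : s ∈ P} contains all compact operators on ℓ²(P). -/

import Mathlib

/-!
On the basis `ε`, `T_s T_s*` is the diagonal projection onto the `ε_t` with `s⁻¹t ∈ P`, so `p_e`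
is the diagonal projection onto the `ε_t` with `a⁻¹t ∉ P` for all `a ∈ F`. Because `FP = P \ {e}`
only `t = e` can survive, and it does survive because `P ∩ P⁻¹ = {e}`. Conjugating `ε_e ⊗ ε_e`
by `T_x` and `T_y*` gives `ε_y ⊗ ε_x`; by density these yield every rank-one operator. Finally a
compact `K` is the norm limit of the operators `P_V K`, with `V` spanned by a finite net of the
image of the unit ball, and each `P_V K` is a finite sum of rank-one operators.
-/

open scoped ComplexInnerProductSpace

open InnerProductSpace (rankOne)

namespace HilbertBasis

variable {ι 𝕜 E : Type*} [RCLike 𝕜] [NormedAddCommGroup E] [InnerProductSpace 𝕜 E]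
  (b : HilbertBasis ι 𝕜 E)

theorem ext_inner {x y : E} (h : ∀ i, inner 𝕜 (b i) x = inner 𝕜 (b i) y) : x = y :=
  b.repr.injective <| lp.ext <| funext fun i => by simp only [b.repr_apply_apply, h]

theorem ext_continuousLinearMap {F : Type*} [NormedAddCommGroup F] [NormedSpace 𝕜 F]
    {A B : E →L[𝕜] F} (h : ∀ i, A (b i) = B (b i)) : A = B :=
  ContinuousLinearMap.ext_on (Submodule.dense_iff_topologicalClosure_eq_top.mpr b.dense_span)
    (by rintro _ ⟨i, rfl⟩; exact h i)

theorem map_mem_of_forall {𝕜' W : Type*} [NormedField 𝕜'] [NormedAddCommGroup W]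
    [NormedSpace 𝕜' W] {σ : 𝕜 →+* 𝕜'} [RingHomIsometric σ] (f : E →SL[σ] W)
    {S : Submodule 𝕜' W} (hS : IsClosed (S : Set W)) (h : ∀ i, f (b i) ∈ S) (x : E) :
    f x ∈ S := by
  have hspan : Submodule.span 𝕜 (Set.range b) ≤ S.comap f :=
    Submodule.span_le.mpr <| by rintro _ ⟨i, rfl⟩; exact h i
  have hclosure := Submodule.topologicalClosure_minimal _ hspan (hS.preimage f.continuous)
  exact hclosure (b.dense_span ▸ Submodule.mem_top)

theorem rankOne_mem_of_forall {S : Submodule 𝕜 (E →L[𝕜] E)} (hS : IsClosed (S : Set (E →L[𝕜] E)))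
    (h : ∀ i j, rankOne 𝕜 (b i) (b j) ∈ S) (x y : E) : rankOne 𝕜 x y ∈ S :=
  b.map_mem_of_forall ((rankOne 𝕜).flip y) hS
    (fun i => b.map_mem_of_forall (rankOne 𝕜 (b i)) hS (h i) y) x

end HilbertBasis

section CompactOperator

variable {𝕜 E : Type*} [RCLike 𝕜] [NormedAddCommGroup E] [InnerProductSpace 𝕜 E]

theorem Submodule.starProjection_comp_mem_of_rankOne_mem [CompleteSpace E] (V : Submodule 𝕜 E)
    [FiniteDimensional 𝕜 V] {S : Submodule 𝕜 (E →L[𝕜] E)} (h : ∀ x y, rankOne 𝕜 x y ∈ S)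
    (K : E →L[𝕜] E) : V.starProjection ∘L K ∈ S := by
  rw [(stdOrthonormalBasis 𝕜 V).starProjection_eq_sum_rankOne, ContinuousLinearMap.finsetSum_comp]
  exact Submodule.sum_mem _ fun i _ => by rw [InnerProductSpace.rankOne_comp]; exact h _ _

theorem Submodule.norm_sub_starProjection_le (V : Submodule 𝕜 E) [V.HasOrthogonalProjection]
    (y : E) {v : E} (hv : v ∈ V) : ‖y - V.starProjection y‖ ≤ ‖y - v‖ := by
  rw [Submodule.starProjection_minimal]
  exact ciInf_le ⟨0, by rintro _ ⟨w, rfl⟩; positivity⟩ (⟨v, hv⟩ : V)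

theorem IsCompactOperator.exists_norm_sub_starProjection_comp_lt {K : E →L[𝕜] E}
    (hK : IsCompactOperator K) {ε : ℝ} (hε : 0 < ε) :
    ∃ (V : Submodule 𝕜 E) (_ : FiniteDimensional 𝕜 V), ‖K - V.starProjection ∘L K‖ < ε := by
  obtain ⟨C, hC, hKC⟩ := hK.image_closedBall_subset_compact (f := (K : E →ₗ[𝕜] E)) 1
  obtain ⟨t, ht, hnet⟩ :=
    Metric.totallyBounded_iff.mp (hC.totallyBounded.subset hKC) (ε / 2) (half_pos hε)
  set V := Submodule.span 𝕜 t
  have : FiniteDimensional 𝕜 V := FiniteDimensional.span_of_finite 𝕜 ht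
  refine ⟨V, inferInstance, ?_⟩
  refine lt_of_le_of_lt (ContinuousLinearMap.opNorm_le_of_unit_norm (half_pos hε).le
    fun x hx => ?_) (half_lt_self hε)
  obtain ⟨v, hv, hKv⟩ := Set.mem_iUnion₂.mp <|
    hnet ⟨x, by simpa [Metric.mem_closedBall] using hx.le, rfl⟩
  calc ‖(K - V.starProjection ∘L K) x‖ = ‖K x - V.starProjection (K x)‖ := rfl
    _ ≤ ‖K x - v‖ := V.norm_sub_starProjection_le _ (Submodule.subset_span hv)
    _ ≤ ε / 2 := (mem_ball_iff_norm.mp hKv).le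

theorem IsCompactOperator.mem_of_rankOne_mem [CompleteSpace E] {S : Submodule 𝕜 (E →L[𝕜] E)}
    (hS : IsClosed (S : Set (E →L[𝕜] E))) (h : ∀ x y, rankOne 𝕜 x y ∈ S) {K : E →L[𝕜] E}
    (hK : IsCompactOperator K) : K ∈ S := by
  refine hS.closure_subset <| Metric.mem_closure_iff.mpr fun ε hε => ?_
  obtain ⟨V, _, hV⟩ := hK.exists_norm_sub_starProjection_comp_lt hε
  exact ⟨_, V.starProjection_comp_mem_of_rankOne_mem h K, by rwa [dist_eq_norm]⟩

end CompactOperator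

section Toeplitz

open ContinuousLinearMap (adjoint)
open scoped Classical

variable {G : Type*} [Group G] {P : Set G} {hmul : ∀ a ∈ P, ∀ b ∈ P, a * b ∈ P}
  {H : Type*} [NormedAddCommGroup H] [InnerProductSpace ℂ H] [CompleteSpace H]
  {b : HilbertBasis P ℂ H} {T : P → H →L[ℂ] H}

theorem toeplitz_adjoint_apply (hT : ∀ s t : P, T s (b t) = b ⟨s * t, hmul _ s.2 _ t.2⟩)
    (s t : P) :
    adjoint (T s) (b t) = if h : (s : G)⁻¹ * t ∈ P then b ⟨_, h⟩ else 0 := by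
  refine b.ext_inner fun u => ?_
  have hb := orthonormal_iff_ite.mp b.orthonormal
  rw [ContinuousLinearMap.adjoint_inner_right, hT, hb]
  by_cases h : (s : G)⁻¹ * t ∈ P
  · rw [dif_pos h, hb]
    exact if_congr (by simp [Subtype.ext_iff, eq_inv_mul_iff_mul_eq]) rfl rfl
  · rw [dif_neg h, inner_zero_right, if_neg]
    rintro rfl
    exact h (by simp)

theorem toeplitz_mul_adjoint_apply (hT : ∀ s t : P, T s (b t) = b ⟨s * t, hmul _ s.2 _ t.2⟩)
    (s t : P) : (T s * adjoint (T s)) (b t) = if (s : G)⁻¹ * t ∈ P then b t else 0 := by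
  rw [mul_apply_eq_comp, toeplitz_adjoint_apply hT]
  split_ifs
  · simp [hT]
  · exact map_zero _

theorem toeplitz_defect_prod_apply (hT : ∀ s t : P, T s (b t) = b ⟨s * t, hmul _ s.2 _ t.2⟩)
    (hone : (1 : G) ∈ P) {ι : Type*} (f : ι → P) (l : List ι) (t : P) :
    (l.map fun i => T ⟨1, hone⟩ * adjoint (T ⟨1, hone⟩) - T (f i) * adjoint (T (f i))).prod (b t)
      = if ∀ i ∈ l, (f i : G)⁻¹ * t ∉ P then b t else 0 := by
  induction l with
  | nil => simp
  | cons i l ih =>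
    rw [List.map_cons, List.prod_cons, mul_apply_eq_comp, ih]
    split_ifs <;> simp_all [toeplitz_mul_adjoint_apply hT]

theorem toeplitz_defect_prod_eq_rankOne
    (hT : ∀ s t : P, T s (b t) = b ⟨s * t, hmul _ s.2 _ t.2⟩) (hone : (1 : G) ∈ P)
    (hpos : ∀ a ∈ P, a⁻¹ ∈ P → a = 1) {ι : Type*} (f : ι → P) (l : List ι)
    (hne : ∀ i ∈ l, (f i : G) ≠ 1)
    (hcover : ∀ t : P, (t : G) ≠ 1 → ∃ i ∈ l, (f i : G)⁻¹ * t ∈ P) :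
    (l.map fun i => T ⟨1, hone⟩ * adjoint (T ⟨1, hone⟩) - T (f i) * adjoint (T (f i))).prod
      = rankOne ℂ (b ⟨1, hone⟩) (b ⟨1, hone⟩) := by
  refine b.ext_continuousLinearMap fun t => ?_
  rw [toeplitz_defect_prod_apply hT, InnerProductSpace.rankOne_apply,
    orthonormal_iff_ite.mp b.orthonormal]
  by_cases ht : (t : G) = 1
  · obtain rfl : t = ⟨1, hone⟩ := Subtype.ext ht
    rw [if_pos rfl, one_smul, if_pos]
    intro i hi h
    exact hne i hi (hpos _ (f i).2 (by simpa using h))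
  · obtain ⟨i, hi, hit⟩ := hcover t ht
    rw [if_neg fun h => ht (congrArg Subtype.val h).symm, zero_smul, if_neg fun h => h i hi hit]

theorem toeplitz_mul_rankOne_mul_adjoint
    (hT : ∀ s t : P, T s (b t) = b ⟨s * t, hmul _ s.2 _ t.2⟩) (hone : (1 : G) ∈ P) (x y : P) :
    T x * rankOne ℂ (b ⟨1, hone⟩) (b ⟨1, hone⟩) * adjoint (T y) = rankOne ℂ (b x) (b y) := by
  have hTone : ∀ s : P, T s (b ⟨1, hone⟩) = b s := fun s => by simp [hT]
  rw [ContinuousLinearMap.mul_def, ContinuousLinearMap.mul_def, InnerProductSpace.comp_rankOne,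
    InnerProductSpace.rankOne_comp, ContinuousLinearMap.adjoint_adjoint, hTone, hTone]

end Toeplitz

theorem stmt6_general {G : Type*} [Group G] (P : Set G)
    (hone : (1 : G) ∈ P)
    (hmul : ∀ a ∈ P, ∀ b ∈ P, a * b ∈ P)
    (hpos : ∀ a ∈ P, a⁻¹ ∈ P → a = 1)
    (F : Finset G) (hF : ↑F ⊆ P \ {1})
    (hFP : {w : G | ∃ a ∈ F, ∃ p ∈ P, w = a * p} = P \ {1})
    {H : Type*} [NormedAddCommGroup H] [InnerProductSpace ℂ H] [CompleteSpace H]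
    (b : HilbertBasis P ℂ H)
    (T : P → H →L[ℂ] H)
    (hT : ∀ s t : P, T s (b t) = b ⟨(s : G) * (t : G), hmul _ s.2 _ t.2⟩)
    (pe : H →L[ℂ] H)
    (hpe : pe = (F.attach.toList.map (fun (a : {w : G // w ∈ F}) =>
      T ⟨1, hone⟩ * ContinuousLinearMap.adjoint (T ⟨1, hone⟩) -
      T ⟨(a : G), (hF (Finset.mem_coe.mpr a.2)).1⟩ *
        ContinuousLinearMap.adjoint (T ⟨(a : G), (hF (Finset.mem_coe.mpr a.2)).1⟩))).prod) :
    (∀ ζ : H, pe ζ = ⟪b ⟨1, hone⟩, ζ⟫ • b ⟨1, hone⟩) ∧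
    (∀ x y : P, ∀ ζ : H,
      (T x * pe * ContinuousLinearMap.adjoint (T y)) ζ = ⟪b y, ζ⟫ • b x) ∧
    (∀ K : H →L[ℂ] H, IsCompactOperator K →
      K ∈ (StarAlgebra.adjoin ℂ (Set.range T)).topologicalClosure) := by
  have hpe_rankOne : pe = rankOne ℂ (b ⟨1, hone⟩) (b ⟨1, hone⟩) := by
    refine hpe ▸ toeplitz_defect_prod_eq_rankOne hT hone hpos
      (fun a : {w : G // w ∈ F} => ⟨a, (hF (Finset.mem_coe.mpr a.2)).1⟩) _
      (fun a _ => (hF (Finset.mem_coe.mpr a.2)).2) fun t ht => ?_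
    obtain ⟨a, ha, p, hp, hta⟩ := hFP.symm.subset (⟨t.2, ht⟩ : (t : G) ∈ P \ {1})
    exact ⟨⟨a, ha⟩, Finset.mem_toList.mpr (Finset.mem_attach _ _), by simpa [hta] using hp⟩
  have hconj : ∀ x y : P, T x * pe * ContinuousLinearMap.adjoint (T y) = rankOne ℂ (b x) (b y) :=
    hpe_rankOne ▸ toeplitz_mul_rankOne_mul_adjoint hT hone
  refine ⟨fun ζ => by rw [hpe_rankOne, InnerProductSpace.rankOne_apply],
    fun x y ζ => by rw [hconj, InnerProductSpace.rankOne_apply], fun K hK => ?_⟩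
  set A := (StarAlgebra.adjoin ℂ (Set.range T)).topologicalClosure
  have hA : IsClosed (A : Set (H →L[ℂ] H)) := StarSubalgebra.isClosed_topologicalClosure _
  have hTA : ∀ s, T s ∈ A := fun s =>
    StarSubalgebra.le_topologicalClosure _ (StarAlgebra.subset_adjoin ℂ _ ⟨s, rfl⟩)
  have hTA' : ∀ s, ContinuousLinearMap.adjoint (T s) ∈ A := fun s => star_mem (hTA s)
  have hpeA : pe ∈ A := hpe ▸ list_prod_mem (by
    simp only [List.mem_map]
    rintro _ ⟨a, -, rfl⟩
    exact sub_mem (mul_mem (hTA _) (hTA' _)) (mul_mem (hTA _) (hTA' _)))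
  have hrankOne : ∀ x y, rankOne ℂ (b x) (b y) ∈ A := fun x y =>
    hconj x y ▸ mul_mem (mul_mem (hTA x) hpeA) (hTA' y)
  exact hK.mem_of_rankOne_mem (S := A.toSubalgebra.toSubmodule) hA
    (b.rankOne_mem_of_forall hA hrankOne)

/-- If `(G, P)` has a FESSPE `F`, then `p_e = ∏_{a ∈ F} (T_e T_e* − T_a T_a*)` is the
rank-one projection onto `ε_e`, for `x, y ∈ P` the operator `T_x p_e T_y*` is the
rank-one operator `ζ ↦ ε_x ⟨ε_y, ζ⟩`, and consequently the C*-algebra generated by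
the Toeplitz isometries `{T_s : s ∈ P}` contains all compact operators on `ℓ²(P)`. -/
theorem stmt6 {G : Type*} [Group G] (P : Set G)
    (hone : (1 : G) ∈ P)
    (hmul : ∀ a ∈ P, ∀ b ∈ P, a * b ∈ P)
    (hpos : ∀ a ∈ P, a⁻¹ ∈ P → a = 1)
    (hql : ∀ x y : G, (∃ u ∈ P, x⁻¹ * u ∈ P ∧ y⁻¹ * u ∈ P) →
      ∃ v ∈ P, x⁻¹ * v ∈ P ∧ y⁻¹ * v ∈ P ∧
        ∀ u ∈ P, x⁻¹ * u ∈ P → y⁻¹ * u ∈ P → v⁻¹ * u ∈ P)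
    (F : Finset G) (hF : ↑F ⊆ P \ {1})
    (hFP : {w : G | ∃ a ∈ F, ∃ p ∈ P, w = a * p} = P \ {1})
    {H : Type*} [NormedAddCommGroup H] [InnerProductSpace ℂ H] [CompleteSpace H]
    (b : HilbertBasis P ℂ H)
    (T : P → H →L[ℂ] H)
    (hT : ∀ s t : P, T s (b t) = b ⟨(s : G) * (t : G), hmul _ s.2 _ t.2⟩)
    (pe : H →L[ℂ] H)
    (hpe : pe = (F.attach.toList.map (fun (a : {w : G // w ∈ F}) =>
      T ⟨1, hone⟩ * ContinuousLinearMap.adjoint (T ⟨1, hone⟩) -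
      T ⟨(a : G), (hF (Finset.mem_coe.mpr a.2)).1⟩ *
        ContinuousLinearMap.adjoint (T ⟨(a : G), (hF (Finset.mem_coe.mpr a.2)).1⟩))).prod) :
    (∀ ζ : H, pe ζ = ⟪b ⟨1, hone⟩, ζ⟫ • b ⟨1, hone⟩) ∧
    (∀ x y : P, ∀ ζ : H,
      (T x * pe * ContinuousLinearMap.adjoint (T y)) ζ = ⟪b y, ζ⟫ • b x) ∧
    (∀ K : H →L[ℂ] H, IsCompactOperator K →
      K ∈ (StarAlgebra.adjoin ℂ (Set.range T)).topologicalClosure) :=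
  stmt6_general P hone hmul hpos F hF hFP b T hT pe hpe
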